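/- arXiv:1412.3064 — 5 statements merged into one kernel-verified Lean document; each statement's English description precedes it below -/
import Mathlib

section
/- Let Γ = (V, E) be a loopless directed graph that is strongly connected and has at least two vertices, and let u, v be distinct nonadjacent vertices with Γ₊(u) ⊆ Γ₊(v) and Γ₋(u) ⊆ Γ₋(v). Then the induced subgraph of Γ on the vertex set V ∖ {u} (the image of the retractive fold identifying u with v) is strongly connected. -/
/-- If a loopless directed graph `Γ = (V, E)` is strongly connected,
has at least two vertices, and `u, v` are distinct nonadjacent vertices with
`Γ₊(u) ⊆ Γ₊(v)` and `Γ₋(u) ⊆ Γ₋(v)`, then the induced subgraph on `V \ {u}`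
(the image of the retractive fold identifying `u` with `v`) is strongly connected.
Strong connectivity is expressed via `Relation.ReflTransGen`. -/
theorem retractive_fold_image_strongly_connected
    {V : Type*} (E : V → V → Prop)
    (hloopless : ∀ w : V, ¬ E w w)
    (hsc : ∀ a b : V, Relation.ReflTransGen E a b)
    (htwo : ∃ a b : V, a ≠ b)
    (u v : V) (huv : u ≠ v) (huv₁ : ¬ E u v) (huv₂ : ¬ E v u)
    (hout : ∀ x : V, E u x → E v x)
    (hin : ∀ x : V, E x u → E x v)
    (E' : {w : V // w ≠ u} → {w : V // w ≠ u} → Prop)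
    (hE' : E' = fun a b => E a.val b.val) :
    ∀ a b : {w : V // w ≠ u}, Relation.ReflTransGen E' a b := by
  classical
  subst hE'
  have hvu : v ≠ u := fun h => huv h.symm
  set f : V → {w : V // w ≠ u} :=
    fun w => if h : w = u then ⟨v, hvu⟩ else ⟨w, h⟩ with hf
  have hedge : ∀ c d : V, E c d →
      E (f c).val (f d).val := by
    intro c d e
    by_cases hc : c = u
    case pos =>
      by_cases hd : d = u
      case pos => subst hc; subst hd; exact absurd e (hloopless _)
      case neg => subst hc; simpa [hf, hd] using hout d e
    case neg =>
      by_cases hd : d = u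
      case pos => subst hd; simpa [hf, hc] using hin c e
      case neg => simpa [hf, hc, hd] using e
  have key : ∀ x y : V, Relation.ReflTransGen E x y →
      Relation.ReflTransGen (fun a b : {w : V // w ≠ u} => E a.val b.val) (f x) (f y) := by
    intro x y h
    induction h with
    | refl => exact .refl
    | tail _ e ih => exact ih.tail (hedge _ _ e)
  intro a b
  have ha : f a.val = a := by
    obtain ⟨a, ha⟩ := a; simp [hf, ha]
  have hb : f b.val = b := by
    obtain ⟨b, hb⟩ := b; simp [hf, hb]
  have := key a.val b.val (hsc a.val b.val)
  rwa [ha, hb] at this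
end

section
/- Let Γ = (V, E) be a loopless directed graph that is terminal with respect to forward folds, i.e., for all distinct vertices u, v, if there exists a vertex x with edges u → x and v → x, then u and v are adjacent (there is an edge u → v or v → u). Then every induced cycle of Γ of length at least 4 is a consistently oriented directed cycle: if v₀, v₁, …, v_{k−1} (k ≥ 4) are the vertices of an induced cycle in cyclic order, then either (v_i, v_{i+1 mod k}) ∈ E for all i and (v_{i+1 mod k}, v_i) ∉ E for all i, or (v_{i+1 mod k}, v_i) ∈ E for all i and (v_i, v_{i+1 mod k}) ∉ E for all i. -/
lemma aux_oriented
    {V : Type*} (E : V → V → Prop)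
    (hterm : ∀ u v : V, u ≠ v → (∃ x : V, E u x ∧ E v x) → (E u v ∨ E v u))
    (k : ℕ) (hk : 4 ≤ k) (c : ZMod k → V)
    (hinj : Function.Injective c)
    (hcyc : ∀ i j : ZMod k, i ≠ j →
      ((E (c i) (c j) ∨ E (c j) (c i)) ↔ (j = i + 1 ∨ i = j + 1)))
    (h0 : E (c 0) (c 1)) :
    ∀ i : ZMod k, E (c i) (c (i + 1)) ∧ ¬ E (c (i + 1)) (c i) := by
  haveI : NeZero k := ⟨by omega⟩
  have hnz : ∀ m : ℕ, 0 < m → m < 4 → ((m : ZMod k) ≠ 0) := by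
    intro m hm1 hm2 h
    have := (ZMod.natCast_eq_zero_iff m k).mp h
    have := Nat.le_of_dvd hm1 this
    omega
  have h1 : (1 : ZMod k) ≠ 0 := by
    have := hnz 1 (by norm_num) (by norm_num); simpa using this
  have h2 : (2 : ZMod k) ≠ 0 := by
    have := hnz 2 (by norm_num) (by norm_num); simpa using this
  have h3 : (3 : ZMod k) ≠ 0 := by
    have := hnz 3 (by norm_num) (by norm_num); simpa using this
  -- anti-sink : no vertex receives from both cycle neighbors
  have antisink : ∀ i : ZMod k, E (c (i - 1)) (c i) → E (c (i + 1)) (c i) → False := by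
    intro i ha hb
    have hne : i - 1 ≠ i + 1 := by
      intro h; exact h2 (by linear_combination -h)
    have hnadj := (hcyc (i - 1) (i + 1) hne)
    have hadj := hterm (c (i - 1)) (c (i + 1)) (fun h => hne (hinj h)) ⟨c i, ha, hb⟩
    rcases hnadj.mp hadj with h | h
    · exact h1 (by linear_combination h)
    · exact h3 (by linear_combination -h)
  have hedge : ∀ i : ZMod k, E (c i) (c (i + 1)) ∨ E (c (i + 1)) (c i) := by
    intro i
    have hne : i ≠ i + 1 := by
      intro h; exact h1 (by linear_combination -h)
    exact (hcyc i (i + 1) hne).mpr (Or.inl rfl)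
  have main : ∀ n : ℕ, E (c (n : ZMod k)) (c ((n : ZMod k) + 1)) := by
    intro n
    induction n with
    | zero => simpa using h0
    | succ n ih =>
      push_cast
      rcases hedge ((n : ZMod k) + 1) with h | h
      · exact h
      · exfalso
        apply antisink ((n : ZMod k) + 1) _ h
        simpa using ih
  have forward : ∀ i : ZMod k, E (c i) (c (i + 1)) := by
    intro i
    obtain ⟨n, rfl⟩ := ZMod.natCast_rightInverse.surjective i
    exact main n
  intro i
  refine ⟨forward i, fun h => antisink i ?_ h⟩
  have := forward (i - 1)
  simpa using this

/-- In a loopless directed graph terminal with respect to forward folds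
(any two distinct vertices with a common out-neighbor are adjacent), every induced
cycle of length `k ≥ 4` (vertices indexed by `ZMod k` in cyclic order, pairwise
distinct, with adjacency exactly between cyclically consecutive vertices) is a
consistently oriented directed cycle. -/
theorem forward_fold_terminal_induced_cycles_oriented
    {V : Type*} (E : V → V → Prop)
    (hloopless : ∀ w : V, ¬ E w w)
    (hterm : ∀ u v : V, u ≠ v → (∃ x : V, E u x ∧ E v x) → (E u v ∨ E v u))
    (k : ℕ) (hk : 4 ≤ k) (c : ZMod k → V)
    (hinj : Function.Injective c)
    (hcyc : ∀ i j : ZMod k, i ≠ j →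
      ((E (c i) (c j) ∨ E (c j) (c i)) ↔ (j = i + 1 ∨ i = j + 1))) :
    (∀ i : ZMod k, E (c i) (c (i + 1)) ∧ ¬ E (c (i + 1)) (c i)) ∨
    (∀ i : ZMod k, E (c (i + 1)) (c i) ∧ ¬ E (c i) (c (i + 1))) := by
  haveI : NeZero k := ⟨by omega⟩
  have h1 : (1 : ZMod k) ≠ 0 := by
    intro h
    have := (ZMod.natCast_eq_zero_iff 1 k).mp (by simpa using h)
    have := Nat.le_of_dvd (by norm_num) this
    omega
  have hne01 : (0 : ZMod k) ≠ 1 := fun h => h1 h.symm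
  rcases (hcyc 0 1 hne01).mpr (Or.inl (by ring)) with h | h
  · exact Or.inl (aux_oriented E hterm k hk c hinj hcyc h)
  · right
    set c' : ZMod k → V := fun i => c (1 - i) with hc'
    have hinj' : Function.Injective c' := by
      intro a b hab
      have := hinj hab
      have : (1 : ZMod k) - a = 1 - b := this
      linear_combination -this
    have hcyc' : ∀ i j : ZMod k, i ≠ j →
        ((E (c' i) (c' j) ∨ E (c' j) (c' i)) ↔ (j = i + 1 ∨ i = j + 1)) := by
      intro i j hij
      have hij' : (1 : ZMod k) - i ≠ 1 - j := by
        intro h; exact hij (by linear_combination -h)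
      rw [show c' i = c (1 - i) from rfl, show c' j = c (1 - j) from rfl,
        hcyc (1 - i) (1 - j) hij']
      constructor
      · rintro (h | h)
        · exact Or.inr (by linear_combination h)
        · exact Or.inl (by linear_combination h)
      · rintro (h | h)
        · exact Or.inr (by linear_combination h)
        · exact Or.inl (by linear_combination h)
    have h0' : E (c' 0) (c' 1) := by
      rw [show c' 0 = c (1 - 0) from rfl, show c' 1 = c (1 - 1) from rfl,
        sub_zero, sub_self]
      exact h
    have hres := aux_oriented E hterm k hk c' hinj' hcyc' h0'
    intro i
    obtain ⟨ha, hb⟩ := hres (-i)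
    have e1 : (1 : ZMod k) - (-i) = i + 1 := by ring
    have e2 : (1 : ZMod k) - (-i + 1) = i := by ring
    rw [show c' (-i) = c (1 - (-i)) from rfl, show c' (-i + 1) = c (1 - (-i + 1)) from rfl,
      e1, e2] at ha hb
    exact ⟨ha, hb⟩
end

section
/- Let Γ = (V, E) be a loopless directed graph that is terminal with respect to backward folds, i.e., for all distinct vertices u, v, if there exists a vertex y with edges y → u and y → v, then u and v are adjacent (there is an edge u → v or v → u). Then every induced cycle of Γ of length at least 4 is a consistently oriented directed cycle: if v₀, v₁, …, v_{k−1} (k ≥ 4) are the vertices of an induced cycle in cyclic order, then either (v_i, v_{i+1 mod k}) ∈ E for all i and (v_{i+1 mod k}, v_i) ∉ E for all i, or (v_{i+1 mod k}, v_i) ∈ E for all i and (v_i, v_{i+1 mod k}) ∉ E for all i. -/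
/-- In a loopless directed graph terminal with respect to backward folds
(any two distinct vertices with a common in-neighbor are adjacent), every induced
cycle of length `k ≥ 4` (vertices indexed by `ZMod k` in cyclic order, pairwise
distinct, with adjacency exactly between cyclically consecutive vertices) is a
consistently oriented directed cycle. -/
theorem backward_fold_terminal_induced_cycles_oriented
    {V : Type*} (E : V → V → Prop)
    (hloopless : ∀ w : V, ¬ E w w)
    (hterm : ∀ u v : V, u ≠ v → (∃ y : V, E y u ∧ E y v) → (E u v ∨ E v u))
    (k : ℕ) (hk : 4 ≤ k) (c : ZMod k → V)
    (hinj : Function.Injective c)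
    (hcyc : ∀ i j : ZMod k, i ≠ j →
      ((E (c i) (c j) ∨ E (c j) (c i)) ↔ (j = i + 1 ∨ i = j + 1))) :
    (∀ i : ZMod k, E (c i) (c (i + 1)) ∧ ¬ E (c (i + 1)) (c i)) ∨
    (∀ i : ZMod k, E (c (i + 1)) (c i) ∧ ¬ E (c i) (c (i + 1))) := by
  haveI : NeZero k := ⟨by omega⟩
  have hnz : ∀ n : ℕ, 0 < n → n < k → (n : ZMod k) ≠ 0 := by
    intro n h1 h2 h
    rw [ZMod.natCast_eq_zero_iff] at h
    exact absurd (Nat.le_of_dvd h1 h) (by omega)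
  have h1 : (1 : ZMod k) ≠ 0 := by
    have := hnz 1 (by omega) (by omega); simpa using this
  have h2 : (2 : ZMod k) ≠ 0 := by
    have := hnz 2 (by omega) (by omega); simpa using this
  have h3 : (3 : ZMod k) ≠ 0 := by
    have := hnz 3 (by omega) (by omega); simpa using this
  -- adjacency between consecutive vertices
  have hadj : ∀ j : ZMod k, E (c j) (c (j + 1)) ∨ E (c (j + 1)) (c j) := by
    intro j
    have hne : j ≠ j + 1 := by
      intro h; apply h1; linear_combination -h
    exact (hcyc j (j + 1) hne).2 (Or.inl rfl)
  -- no vertex has out-edges to both its cycle neighbors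
  have hfork : ∀ i : ZMod k, ¬ (E (c i) (c (i + 1)) ∧ E (c i) (c (i - 1))) := by
    rintro i ⟨ha, hb⟩
    have hne : i + 1 ≠ i - 1 := by
      intro h; apply h2; linear_combination h
    have hadj2 := hterm (c (i + 1)) (c (i - 1)) (fun h => hne (hinj h)) ⟨c i, ha, hb⟩
    have := (hcyc (i + 1) (i - 1) hne).1 hadj2
    rcases this with h | h
    · exact h3 (by linear_combination -h)
    · exact h1 (by linear_combination h)
  -- backward edges propagate
  have hprop : ∀ j : ZMod k, E (c (j + 1)) (c j) → E (c (j + 1 + 1)) (c (j + 1)) := by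
    intro j hq
    rcases hadj (j + 1) with hp | hq'
    · exact absurd ⟨hp, by simpa using hq⟩ (hfork (j + 1))
    · exact hq'
  by_cases hQ : ∃ j : ZMod k, E (c (j + 1)) (c j)
  · -- all backward
    obtain ⟨j0, hj0⟩ := hQ
    have hall : ∀ n : ℕ, E (c (j0 + n + 1)) (c (j0 + n)) := by
      intro n
      induction n with
      | zero => simpa using hj0
      | succ m ih =>
        have := hprop (j0 + m) ih
        have e : (j0 : ZMod k) + ((m + 1 : ℕ) : ZMod k) = j0 + (m : ZMod k) + 1 := by
          push_cast; ring
        rw [e]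
        exact this
    have hallz : ∀ m : ZMod k, E (c (m + 1)) (c m) := by
      intro m
      have := hall (m - j0).val
      have hv : ((m - j0).val : ZMod k) = m - j0 := by
        simp [ZMod.natCast_val, ZMod.cast_id]
      rw [hv] at this
      simpa using this
    right
    intro i
    refine ⟨hallz i, fun hp => ?_⟩
    have := hallz (i - 1)
    have hb : E (c i) (c (i - 1)) := by simpa using this
    exact hfork i ⟨hp, hb⟩
  · -- all forward
    push_neg at hQ
    left
    intro i
    exact ⟨(hadj i).resolve_right (hQ i), hQ i⟩
end

section
/- Let Γ = (V, E) be a loopless directed graph that is terminal with respect to disjunctive folds, i.e., for all distinct vertices u, v, if there exists a vertex x with u → x and v → x, or a vertex y with y → u and y → v, then u and v are adjacent. Then the only induced cycles of Γ are consistently oriented directed cycles and (arbitrarily oriented) triangles; that is, every induced cycle of length at least 4, listed as v₀, v₁, …, v_{k−1} (k ≥ 4) in cyclic order, satisfies: either (v_i, v_{i+1 mod k}) ∈ E for all i and (v_{i+1 mod k}, v_i) ∉ E for all i, or (v_{i+1 mod k}, v_i) ∈ E for all i and (v_i, v_{i+1 mod k}) ∉ E for all i. -/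
theorem aux_fold_cycle {V : Type*} (E : V → V → Prop)
    (hterm : ∀ u v : V, u ≠ v →
      ((∃ x : V, E u x ∧ E v x) ∨ (∃ y : V, E y u ∧ E y v)) → (E u v ∨ E v u))
    (k : ℕ) (hk : 4 ≤ k) (c : ZMod k → V)
    (hinj : Function.Injective c)
    (hcyc : ∀ i j : ZMod k, i ≠ j →
      ((E (c i) (c j) ∨ E (c j) (c i)) ↔ (j = i + 1 ∨ i = j + 1)))
    (h0 : E (c 0) (c (0 + 1))) :
    ∀ i : ZMod k, E (c i) (c (i + 1)) ∧ ¬ E (c (i + 1)) (c i) := by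
  haveI : NeZero k := ⟨by omega⟩
  have hz : ∀ n : ℕ, 0 < n → n < 4 → ((n : ZMod k) ≠ 0) := by
    intro n hn hn4 h
    have hdvd : k ∣ n := (ZMod.natCast_eq_zero_iff n k).mp h
    have := Nat.le_of_dvd hn hdvd
    omega
  have h1 := hz 1 (by omega) (by omega)
  have h2 := hz 2 (by omega) (by omega)
  have h3 := hz 3 (by omega) (by omega)
  push_cast at h1 h2 h3
  have hne1 : ∀ i : ZMod k, i ≠ i + 1 := fun i h => h1 (by linear_combination -h)
  have hne2 : ∀ i : ZMod k, i ≠ i + 2 := fun i h => h2 (by linear_combination -h)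
  have hadj : ∀ i : ZMod k, E (c i) (c (i + 1)) ∨ E (c (i + 1)) (c i) := by
    intro i
    exact (hcyc i (i + 1) (hne1 i)).mpr (Or.inl rfl)
  have hna : ∀ i : ZMod k, ¬ (E (c i) (c (i + 2)) ∨ E (c (i + 2)) (c i)) := by
    intro i h
    rcases (hcyc i (i + 2) (hne2 i)).mp h with h' | h'
    · exact h1 (by linear_combination h')
    · exact h3 (by linear_combination -h')
  have hcne : ∀ i : ZMod k, c i ≠ c (i + 2) := fun i h => hne2 i (hinj h)
  have hout : ∀ i : ZMod k, ¬ (E (c i) (c (i + 1)) ∧ E (c (i + 2)) (c (i + 1))) := by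
    rintro i ⟨ha, hb⟩
    exact hna i (hterm (c i) (c (i + 2)) (hcne i) (Or.inl ⟨c (i + 1), ha, hb⟩))
  have hin : ∀ i : ZMod k, ¬ (E (c (i + 1)) (c i) ∧ E (c (i + 1)) (c (i + 2))) := by
    rintro i ⟨ha, hb⟩
    exact hna i (hterm (c i) (c (i + 2)) (hcne i) (Or.inr ⟨c (i + 1), ha, hb⟩))
  have h11 : ∀ i : ZMod k, i + 1 + 1 = i + 2 := fun i => by ring
  have hprop : ∀ i : ZMod k, E (c i) (c (i + 1)) → E (c (i + 1)) (c (i + 2)) := by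
    intro i h
    rcases hadj (i + 1) with h' | h'
    · rwa [h11 i] at h'
    · rw [h11 i] at h'
      exact absurd ⟨h, h'⟩ (hout i)
  have key : ∀ n : ℕ, E (c (n : ZMod k)) (c ((n : ZMod k) + 1)) := by
    intro n
    induction n with
    | zero => simpa using h0
    | succ m ih =>
        have h' := hprop (m : ZMod k) ih
        push_cast
        rw [show ((m : ZMod k) + 1) + 1 = (m : ZMod k) + 2 from by ring]
        exact h'
  have fwd : ∀ i : ZMod k, E (c i) (c (i + 1)) := by
    intro i
    have h' := key i.val
    rwa [ZMod.natCast_rightInverse i] at h'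
  intro i
  refine ⟨fwd i, fun hrev => hin i ⟨hrev, ?_⟩⟩
  have h' := fwd (i + 1)
  rwa [h11 i] at h'

/-- In a loopless directed graph terminal with respect to disjunctive
folds (any two distinct vertices with a common out-neighbor or a common in-neighbor
are adjacent), every induced cycle of length `k ≥ 4` (vertices indexed by `ZMod k`
in cyclic order, pairwise distinct, with adjacency exactly between cyclically
consecutive vertices) is a consistently oriented directed cycle; thus the only
induced cycles are oriented cycles and (arbitrarily oriented) triangles. -/
theorem disjunctive_fold_terminal_induced_cycles_oriented
    {V : Type*} (E : V → V → Prop)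
    (hloopless : ∀ w : V, ¬ E w w)
    (hterm : ∀ u v : V, u ≠ v →
      ((∃ x : V, E u x ∧ E v x) ∨ (∃ y : V, E y u ∧ E y v)) → (E u v ∨ E v u))
    (k : ℕ) (hk : 4 ≤ k) (c : ZMod k → V)
    (hinj : Function.Injective c)
    (hcyc : ∀ i j : ZMod k, i ≠ j →
      ((E (c i) (c j) ∨ E (c j) (c i)) ↔ (j = i + 1 ∨ i = j + 1))) :
    (∀ i : ZMod k, E (c i) (c (i + 1)) ∧ ¬ E (c (i + 1)) (c i)) ∨
    (∀ i : ZMod k, E (c (i + 1)) (c i) ∧ ¬ E (c i) (c (i + 1))) := by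
  haveI : NeZero k := ⟨by omega⟩
  have h1 : (1 : ZMod k) ≠ 0 := by
    intro h
    have h' : ((1 : ℕ) : ZMod k) = 0 := by exact_mod_cast h
    have hdvd : k ∣ 1 := (ZMod.natCast_eq_zero_iff 1 k).mp h'
    have := Nat.le_of_dvd one_pos hdvd
    omega
  have hne1 : (0 : ZMod k) ≠ 0 + 1 := fun h => h1 (by linear_combination -h)
  rcases (hcyc 0 (0 + 1) hne1).mpr (Or.inl rfl) with h0 | h0
  · exact Or.inl (aux_fold_cycle E hterm k hk c hinj hcyc h0)
  · right
    have hterm' : ∀ u v : V, u ≠ v →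
        ((∃ x : V, E x u ∧ E x v) ∨ (∃ y : V, E u y ∧ E v y)) → (E v u ∨ E u v) := by
      intro u v huv h
      exact (hterm u v huv h.symm).symm
    have hcyc' : ∀ i j : ZMod k, i ≠ j →
        ((E (c j) (c i) ∨ E (c i) (c j)) ↔ (j = i + 1 ∨ i = j + 1)) := by
      intro i j hij
      rw [or_comm]
      exact hcyc i j hij
    exact aux_fold_cycle (fun u v => E v u) hterm' k hk c hinj hcyc' h0
end

section
/- Let G be a connected undirected simple graph in which no simple fold is possible, i.e., any two distinct nonadjacent vertices have no common neighbour (equivalently: any two distinct vertices that have a common neighbour are adjacent). Then G is a complete graph. Consequently, for undirected graphs, terminal homomorphisms map connected graphs onto complete graphs. -/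
/-- A connected undirected simple graph in which no simple fold is
possible (any two distinct vertices with a common neighbour are adjacent) is a
complete graph. -/
theorem no_simple_fold_connected_is_complete
    {V : Type*} (G : SimpleGraph V)
    (hconn : G.Connected)
    (hterm : ∀ u v : V, u ≠ v → (∃ w : V, G.Adj w u ∧ G.Adj w v) → G.Adj u v) :
    ∀ u v : V, u ≠ v → G.Adj u v := by
  have key : ∀ {a b : V} (_ : G.Walk a b), a ≠ b → G.Adj a b := by
    intro a b p
    induction p with
    | nil => intro h; exact absurd rfl h
    | @cons x y z hxy q ih =>
      intro hxz
      by_cases hyz : y = z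
      · exact hyz ▸ hxy
      · exact hterm x z hxz ⟨y, hxy.symm, ih hyz⟩
  intro u v huv
  exact key (hconn u v).some huv
end
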